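/- Suppose m > 2n, and let π be a permutation of the coordinate index set {1,…,m} with exactly n inversions. Then there exists a permutation π' of {1,…,2n} with exactly n inversions such that the induced subgraph Γ(m,n,π) of SR(m,n) on the vertex set X_π is isomorphic (as a simple graph) to the induced subgraph Γ(2n,n,π') of SR(2n,n) on the vertex set X_{π'}. -/

import Mathlib

open Matrix Polynomial

/-- Vertices of the simplicial rook graph: nonnegative integer vectors of length `m` summing to `n`. -/
abbrev SRVertex (m n : ℕ) : Type := {x : Fin m → ℕ // ∑ i, x i = n}

instance (m n : ℕ) : Fintype (SRVertex m n) :=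
  Fintype.subtype (Finset.Nat.antidiagonalTuple m n) fun _ =>
    Finset.Nat.mem_antidiagonalTuple

/-- The simplicial rook graph `SR(m,n)`. -/
def SR (m n : ℕ) : SimpleGraph (SRVertex m n) where
  Adj x y := (Finset.univ.filter fun i => x.1 i ≠ y.1 i).card = 2
  symm := by
    constructor
    intro x y h
    have : (Finset.univ.filter fun i => y.1 i ≠ x.1 i)
        = (Finset.univ.filter fun i => x.1 i ≠ y.1 i) := by
      apply Finset.filter_congr
      intro i _
      simp [ne_comm]
    rw [this]; exact h
  loopless := by
    constructor
    intro x h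
    simp at h

instance (m n : ℕ) : DecidableRel (SR m n).Adj := fun x y =>
  inferInstanceAs (Decidable ((Finset.univ.filter fun i => x.1 i ≠ y.1 i).card = 2))

/-- The inversion table of a permutation: `a i = #{ j | i < j ∧ π i > π j }`. -/
def invTable (m : ℕ) (π : Equiv.Perm (Fin m)) (i : Fin m) : ℕ :=
  (Finset.univ.filter fun j : Fin m => i < j ∧ π j < π i).card

/-- The number of inversions of a permutation. -/
def inversions (m : ℕ) (π : Equiv.Perm (Fin m)) : ℕ :=
  ∑ i, invTable m π i

/-- `σ` is `π`-admissible when `a i + i - σ i ≥ 0` for all `i`. -/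
def Admissible (m : ℕ) (π σ : Equiv.Perm (Fin m)) : Prop :=
  ∀ i : Fin m, (σ i : ℕ) ≤ invTable m π i + (i : ℕ)

/-- The set `X_π` of vertices `x(σ)`, for `π`-admissible `σ`, where
`x(σ) i = a i + i - σ i`. -/
def Xpi (m n : ℕ) (π : Equiv.Perm (Fin m)) : Set (SRVertex m n) :=
  {x | ∃ σ : Equiv.Perm (Fin m), Admissible m π σ ∧
    ∀ i : Fin m, x.1 i + (σ i : ℕ) = invTable m π i + (i : ℕ)}

open Finset Function Equiv

/-!
Write `b` for the inversion table of `π`; it satisfies `b i + i < m`, and `x ∈ X_π` exactly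
when `i ↦ b i + i - x i` is injective (it is then `σ`). Call `p` a cut of `b` if `b p = 0` and
`b j + j < p` for all `j < p`. Every admissible `σ` maps `{j < p}` onto itself and hence fixes
`p`, so all vertices of `X_π` vanish at `p`, and deleting coordinate `p` identifies `Γ(m,n,π)`
with the graph of the table `b` with entry `p` removed. A position that is not a cut lies in
some interval `[j, j + b j]` with `b j > 0`; these cover at most `∑ (b j + 1) ≤ 2n` positions,
so a cut exists as long as `m > 2n`. Deleting cuts down to length `2n` and taking for `π'` the
permutation with the resulting inversion table gives the theorem.
-/

lemma Fin.val_succAbove_eq {s : ℕ} (p : Fin (s + 1)) (j : Fin s) :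
    (p.succAbove j : ℕ) = if (j : ℕ) < p then (j : ℕ) else (j : ℕ) + 1 := by
  unfold Fin.succAbove
  split_ifs <;> simp_all [Fin.lt_def]

lemma Fin.lt_iff_of_injective_of_lt {t q : ℕ} {f : Fin t → ℕ} (hf : Injective f) (hq : q ≤ t)
    (hmaps : ∀ i : Fin t, (i : ℕ) < q → f i < q) (i : Fin t) : f i < q ↔ (i : ℕ) < q := by
  refine ⟨fun hi => ?_, hmaps i⟩
  have himage : image f {j | (j : ℕ) < q} = range q := by
    refine eq_of_subset_of_card_le (fun v hv => ?_) ?_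
    · obtain ⟨j, hj, rfl⟩ := mem_image.mp hv
      exact mem_range.mpr (hmaps j (mem_filter.mp hj).2)
    · rw [card_image_of_injective _ hf, Fin.card_filter_val_lt, card_range]
      omega
  obtain ⟨j, hj, hji⟩ := mem_image.mp (himage ▸ mem_range.mpr hi)
  exact hf hji ▸ (mem_filter.mp hj).2

section LehmerCode
variable {s : ℕ}

def IsLehmerCode (c : Fin s → ℕ) : Prop := ∀ i, c i + i < s

lemma isLehmerCode_invTable (π : Perm (Fin s)) : IsLehmerCode (invTable s π) := by
  intro i
  have : invTable s π i ≤ #(Ioi i) :=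
    card_le_card fun j hj => mem_Ioi.mpr (mem_filter.mp hj).2.1
  rw [Fin.card_Ioi] at this
  omega

def consPerm (p : Fin (s + 1)) (τ : Perm (Fin s)) : Perm (Fin (s + 1)) :=
  (finSuccEquiv s).trans (τ.optionCongr.trans (finSuccEquiv' p).symm)

@[simp] lemma consPerm_zero (p : Fin (s + 1)) (τ : Perm (Fin s)) : consPerm p τ 0 = p := by
  simp [consPerm]

@[simp] lemma consPerm_succ (p : Fin (s + 1)) (τ : Perm (Fin s)) (j : Fin s) :
    consPerm p τ j.succ = p.succAbove (τ j) := by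
  simp [consPerm]

lemma invTable_consPerm_zero (p : Fin (s + 1)) (τ : Perm (Fin s)) :
    invTable (s + 1) (consPerm p τ) 0 = p := by
  rw [invTable, Fin.card_filter_univ_succ']
  have : #{w : Fin s | (τ w : ℕ) < p} = #{v : Fin s | (v : ℕ) < p} := card_equiv τ (by simp)
  simp only [lt_self_iff_false, false_and, if_false, zero_add, Fin.succ_pos, true_and,
    consPerm_zero, consPerm_succ, Fin.succAbove_lt_iff_castSucc_lt]
  simp only [Fin.lt_def, Fin.val_castSucc, this, Fin.card_filter_val_lt]
  omega

lemma invTable_consPerm_succ (p : Fin (s + 1)) (τ : Perm (Fin s)) (j : Fin s) :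
    invTable (s + 1) (consPerm p τ) j.succ = invTable s τ j := by
  rw [invTable, Fin.card_filter_univ_succ']
  simp [invTable, Fin.succ_lt_succ_iff, Fin.succAbove_lt_succAbove_iff]

theorem exists_invTable_eq : ∀ {s : ℕ} {c : Fin s → ℕ}, IsLehmerCode c → ∃ π, invTable s π = c
  | 0, _, _ => ⟨1, funext fun i => i.elim0⟩
  | s + 1, c, hc => by
    obtain ⟨τ, hτ⟩ := exists_invTable_eq (c := fun j => c j.succ) fun j => by
      have := hc j.succ
      simp only [Fin.val_succ] at this
      dsimp only
      omega
    refine ⟨consPerm ⟨c 0, by simpa using hc 0⟩ τ, funext fun i => ?_⟩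
    cases i using Fin.cases with
    | zero => exact invTable_consPerm_zero _ _
    | succ j => rw [invTable_consPerm_succ, hτ]

end LehmerCode

section AdmissibleVertex
variable {s : ℕ}

/-- `f` plays the role of `σ`; it takes values in `ℕ` so that it survives deleting a
coordinate. -/
def IsAdmissibleVertex (b x : Fin s → ℕ) : Prop :=
  ∃ f : Fin s → ℕ, Injective f ∧ ∀ i, x i + f i = b i + i

def admissibleVertices (n : ℕ) (b : Fin s → ℕ) : Set (SRVertex s n) :=
  {x | IsAdmissibleVertex b x.1}

lemma Xpi_eq_admissibleVertices (n : ℕ) (π : Perm (Fin s)) :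
    Xpi s n π = admissibleVertices n (invTable s π) := by
  ext x
  constructor
  · rintro ⟨σ, -, hσ⟩
    exact ⟨fun i => σ i, Fin.val_injective.comp σ.injective, hσ⟩
  · rintro ⟨f, hf, hx⟩
    have hlt (i : Fin s) : f i < s := by
      have := isLehmerCode_invTable π i
      have := hx i
      omega
    have hinj : Injective fun i => (⟨f i, hlt i⟩ : Fin s) :=
      fun i j hij => hf (congrArg Fin.val hij)
    refine ⟨Equiv.ofBijective _ (Finite.injective_iff_bijective.mp hinj), fun i => ?_, hx⟩
    have := hx i
    simp only [Equiv.ofBijective_apply]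
    omega

end AdmissibleVertex

section Cut
variable {s : ℕ}

def IsCut (b : Fin s → ℕ) (p : Fin s) : Prop := b p = 0 ∧ ∀ j, j < p → b j + j < p

lemma exists_isCut {b : Fin s → ℕ} (h : 2 * ∑ i, b i < s) : ∃ p, IsCut b p := by
  by_contra! hno
  let reach (j : Fin s) : Finset (Fin s) := {p | j ≤ p ∧ (p : ℕ) ≤ b j + j}
  have hcover : (univ : Finset (Fin s)) ⊆ ({j | 0 < b j} : Finset (Fin s)).biUnion reach := by
    intro p _
    simp only [mem_biUnion, mem_filter, mem_univ, true_and, reach]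
    by_cases hp : b p = 0
    · obtain ⟨j, hjp, hj⟩ : ∃ j, j < p ∧ p ≤ b j + j := by simpa [IsCut, hp] using hno p
      exact ⟨j, by omega, hjp.le, hj⟩
    · exact ⟨p, by omega, le_rfl, by omega⟩
  have hreach (j : Fin s) : #(reach j) ≤ b j + 1 :=
    calc #(reach j) ≤ #(Icc (j : ℕ) (b j + j)) :=
          card_le_card_of_injOn Fin.val (fun p hp => by
            obtain ⟨hjp, hpb⟩ := (mem_filter.mp (mem_coe.mp hp)).2
            exact mem_coe.mpr (mem_Icc.mpr ⟨hjp, hpb⟩)) Fin.val_injective.injOn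
      _ = b j + 1 := by rw [Nat.card_Icc]; omega
  have := calc s = #(univ : Finset (Fin s)) := (card_fin s).symm
    _ ≤ ∑ j ∈ {j | 0 < b j}, (b j + 1) :=
        (card_le_card hcover).trans (card_biUnion_le.trans (sum_le_sum fun j _ => hreach j))
    _ ≤ ∑ j ∈ {j | 0 < b j}, 2 * b j := sum_le_sum fun j hj => by
        have := (mem_filter.mp hj).2
        omega
    _ ≤ ∑ j, 2 * b j := sum_le_sum_of_subset (subset_univ _)
    _ = 2 * ∑ j, b j := (mul_sum ..).symm
  omega

variable {b : Fin s → ℕ} {p : Fin s} {f : Fin s → ℕ}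

lemma IsCut.witness_lt_iff (hp : IsCut b p) (hf : Injective f) (hfb : ∀ i, f i ≤ b i + i)
    (i : Fin s) : f i < p ↔ i < p :=
  Fin.lt_iff_of_injective_of_lt hf p.isLt.le (fun j hj => (hfb j).trans_lt (hp.2 j hj)) i

lemma IsCut.witness_self (hp : IsCut b p) (hf : Injective f) (hfb : ∀ i, f i ≤ b i + i) :
    f p = p := by
  have hlt := hp.witness_lt_iff hf hfb p
  have hle := hfb p
  rw [hp.1, zero_add] at hle
  exact le_antisymm hle (not_lt.mp fun h => lt_irrefl p (hlt.mp h))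

lemma IsCut.apply_eq_zero (hp : IsCut b p) {x : Fin s → ℕ} (hx : IsAdmissibleVertex b x) :
    x p = 0 := by
  obtain ⟨f, hf, hxf⟩ := hx
  have := hp.witness_self hf fun i => by have := hxf i; omega
  have := hxf p
  rw [hp.1] at this
  omega

end Cut

section Deletion
variable {s : ℕ} {b : Fin (s + 1) → ℕ} {p : Fin (s + 1)}

lemma IsCut.isLehmerCode_removeNth (hp : IsCut b p) (hb : IsLehmerCode b) :
    IsLehmerCode (Fin.removeNth p b) := by
  intro j
  have h1 := hb (p.succAbove j)
  have h2 := hp.2 (p.succAbove j)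
  rw [Fin.lt_def, Fin.val_succAbove_eq] at h2
  rw [Fin.val_succAbove_eq] at h1
  rw [Fin.removeNth_apply]
  have := p.isLt
  split_ifs at h1 h2 <;> omega

lemma IsCut.isAdmissibleVertex_removeNth (hp : IsCut b p) {x : Fin (s + 1) → ℕ}
    (hx : IsAdmissibleVertex b x) :
    IsAdmissibleVertex (Fin.removeNth p b) (Fin.removeNth p x) := by
  obtain ⟨f, hf, hxf⟩ := hx
  have hfb (i : Fin (s + 1)) : f i ≤ b i + i := by have := hxf i; omega
  have hfp := hp.witness_self hf hfb
  have hshape (j : Fin s) : (f (p.succAbove j) < p ↔ (j : ℕ) < p) ∧ f (p.succAbove j) ≠ p ∧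
      (p.succAbove j : ℕ) = if (j : ℕ) < p then (j : ℕ) else (j : ℕ) + 1 := by
    refine ⟨?_, fun h => p.succAbove_ne j (hf (h.trans hfp.symm)), Fin.val_succAbove_eq p j⟩
    rw [hp.witness_lt_iff hf hfb, Fin.lt_def, Fin.val_succAbove_eq]
    split_ifs <;> omega
  refine ⟨fun j => if (j : ℕ) < p then f (p.succAbove j) else f (p.succAbove j) - 1, ?_, ?_⟩
  · intro j₁ j₂ h
    have h₁ := hshape j₁
    have h₂ := hshape j₂
    simp only at h
    apply p.succAbove_right_injective
    apply hf
    split_ifs at h h₁ h₂ <;> omega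
  · intro j
    have := hxf (p.succAbove j)
    have h₁ := hshape j
    simp only [Fin.removeNth_apply]
    split_ifs at h₁ ⊢ <;> omega

lemma IsCut.isAdmissibleVertex_insertNth (hp : IsCut b p) {y : Fin s → ℕ}
    (hy : IsAdmissibleVertex (Fin.removeNth p b) y) :
    IsAdmissibleVertex b (Fin.insertNth p 0 y) := by
  obtain ⟨g, hg, hyg⟩ := hy
  have hlt (j : Fin s) : g j < p ↔ (j : ℕ) < p := by
    refine Fin.lt_iff_of_injective_of_lt hg (Nat.lt_succ_iff.mp p.isLt) (fun j hj => ?_) j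
    have := hyg j
    have := hp.2 (p.succAbove j)
    rw [Fin.lt_def, Fin.val_succAbove_eq, if_pos hj] at this
    rw [Fin.removeNth_apply] at *
    omega
  refine ⟨Fin.insertNth p (p : ℕ) fun j => if (j : ℕ) < p then g j else g j + 1, ?_, ?_⟩
  · unfold Injective
    simp only [Fin.forall_iff_succAbove p, Fin.insertNth_apply_same,
      Fin.insertNth_apply_succAbove]
    refine ⟨⟨fun _ => trivial, fun j h => ?_⟩, fun j₁ => ⟨fun h => ?_, fun j₂ h => ?_⟩⟩
    · have := hlt j
      split_ifs at h <;> omega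
    · have := hlt j₁
      split_ifs at h <;> omega
    · have := hlt j₁
      have := hlt j₂
      exact congrArg _ (hg (by split_ifs at h <;> omega))
  · rw [Fin.forall_iff_succAbove p]
    refine ⟨by simp [hp.1], fun j => ?_⟩
    have := hyg j
    have := hlt j
    simp only [Fin.insertNth_apply_succAbove, Fin.removeNth_apply, Fin.val_succAbove_eq] at *
    split_ifs at * <;> omega

lemma card_filter_removeNth_ne {x y : Fin (s + 1) → ℕ} (h : x p = y p) :
    #{j | Fin.removeNth p x j ≠ Fin.removeNth p y j} = #{i | x i ≠ y i} := by
  rw [card_filter, card_filter, Fin.sum_univ_succAbove _ p, h]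
  simp only [ne_eq, not_true_eq_false, if_false, zero_add]
  -- the two sides differ only in their `Decidable` instances
  rfl

def IsCut.admissibleVertexEquiv (hp : IsCut b p) (n : ℕ) :
    admissibleVertices n b ≃ admissibleVertices n (Fin.removeNth p b) where
  toFun x := ⟨⟨Fin.removeNth p x.1.1, by
    have := Fin.add_sum_removeNth p x.1.1
    rw [hp.apply_eq_zero x.2, x.1.2] at this
    omega⟩, hp.isAdmissibleVertex_removeNth x.2⟩
  invFun y := ⟨⟨Fin.insertNth p 0 y.1.1, by rw [Fin.sum_insertNth, zero_add, y.1.2]⟩,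
    hp.isAdmissibleVertex_insertNth y.2⟩
  left_inv x := by
    ext : 2
    simp [← hp.apply_eq_zero x.2]
  right_inv y := by
    ext : 2
    simp

def IsCut.inducedIso (hp : IsCut b p) (n : ℕ) :
    (SR (s + 1) n).induce (admissibleVertices n b) ≃g
      (SR s n).induce (admissibleVertices n (Fin.removeNth p b)) where
  toEquiv := hp.admissibleVertexEquiv n
  map_rel_iff' {x y} := by
    simp only [SimpleGraph.induce_adj]
    show #{j | Fin.removeNth p x.1.1 j ≠ Fin.removeNth p y.1.1 j} = 2 ↔
      #{i | x.1.1 i ≠ y.1.1 i} = 2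
    rw [card_filter_removeNth_ne (by rw [hp.apply_eq_zero x.2, hp.apply_eq_zero y.2])]

end Deletion

theorem exists_inducedIso_of_two_mul_le (n : ℕ) {s : ℕ} (hs : 2 * n ≤ s) :
    ∀ b : Fin s → ℕ, IsLehmerCode b → ∑ i, b i = n →
      ∃ c : Fin (2 * n) → ℕ, IsLehmerCode c ∧ ∑ i, c i = n ∧
        Nonempty ((SR s n).induce (admissibleVertices n b) ≃g
          (SR (2 * n) n).induce (admissibleVertices n c)) := by
  induction s, hs using Nat.le_induction with
  | base => exact fun b hb hsum => ⟨b, hb, hsum, ⟨.refl⟩⟩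
  | succ s hs ih =>
    intro b hb hsum
    obtain ⟨p, hp⟩ := exists_isCut (b := b) (by omega)
    obtain ⟨c, hc, hcsum, ⟨e⟩⟩ := ih _ (hp.isLehmerCode_removeNth hb)
      (by rw [← hsum, ← Fin.add_sum_removeNth p b, hp.1, zero_add])
    exact ⟨c, hc, hcsum, ⟨(hp.inducedIso n).trans e⟩⟩

/-- If `m > 2n` and `π ∈ Sym(m)` has exactly `n` inversions, then the induced subgraph
`Γ(m,n,π)` of `SR(m,n)` on `X_π` is isomorphic to `Γ(2n,n,π')` for some
`π' ∈ Sym(2n)` with exactly `n` inversions. -/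
theorem SR_Gamma_reduction (m n : ℕ) (hmn : 2 * n < m) (π : Equiv.Perm (Fin m))
    (hπ : inversions m π = n) :
    ∃ π' : Equiv.Perm (Fin (2 * n)), inversions (2 * n) π' = n ∧
      Nonempty ((SR m n).induce (Xpi m n π) ≃g (SR (2 * n) n).induce (Xpi (2 * n) n π')) := by
  obtain ⟨c, hc, hcsum, e⟩ :=
    exists_inducedIso_of_two_mul_le n hmn.le (invTable m π) (isLehmerCode_invTable π) hπ
  obtain ⟨π', rfl⟩ := exists_invTable_eq hc
  refine ⟨π', hcsum, ?_⟩
  rwa [Xpi_eq_admissibleVertices, Xpi_eq_admissibleVertices]
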